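/- Let f : {0,1}^{K+U} → ℝ be a pseudo-Boolean function containing the product x_i x_j, let f' be obtained from f by replacing every occurrence of x_i x_j with a new Boolean variable y, and let λ > max over Boolean inputs of |f| be sufficiently large (in fact λ greater than the spread of f' suffices). Then min over {0,1}^{K+U} of f equals min over all Boolean assignments including y of f' + λ(x_i x_j - 2 x_i y - 2 x_j y + 3 y). -/

import Mathlib

/-!
On Boolean inputs the penalty `a b - 2 a y - 2 b y + 3 y` vanishes when `y = a b` and is at least
`1` otherwise. So setting `y = x_i x_j` turns every value of `f` into a value of the penalized
function, while an assignment with `y ≠ x_i x_j` pays at least `λ`, more than `f'` can gain by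
moving `y` away from `x_i x_j`; hence it is never below the value of `f` at the same `x`.
-/

section Penalty

variable {R : Type*}

lemma mul_eq_zero_or_eq_one [MulZeroOneClass R] {a b : R} (ha : a = 0 ∨ a = 1)
    (hb : b = 0 ∨ b = 1) : a * b = 0 ∨ a * b = 1 := by
  rcases ha with rfl | rfl <;> simp [hb]

lemma penalty_self_mul_eq_zero [CommRing R] {a b : R} (ha : a = 0 ∨ a = 1)
    (hb : b = 0 ∨ b = 1) : a * b - 2 * a * (a * b) - 2 * b * (a * b) + 3 * (a * b) = 0 := by
  rcases ha with rfl | rfl <;> rcases hb with rfl | rfl <;> ring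

variable [CommRing R] [LinearOrder R] [IsStrictOrderedRing R]

lemma one_le_penalty {a b y : R} (ha : a = 0 ∨ a = 1) (hb : b = 0 ∨ b = 1)
    (hy : y = 0 ∨ y = 1) (hne : y ≠ a * b) : 1 ≤ a * b - 2 * a * y - 2 * b * y + 3 * y := by
  rcases ha with rfl | rfl <;> rcases hb with rfl | rfl <;> rcases hy with rfl | rfl <;>
    revert hne <;> norm_num

lemma le_add_mul_penalty {g : R → R} {lam a b y : R}
    (hg : ∀ z z', (z = 0 ∨ z = 1) → (z' = 0 ∨ z' = 1) → g z - g z' < lam)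
    (ha : a = 0 ∨ a = 1) (hb : b = 0 ∨ b = 1) (hy : y = 0 ∨ y = 1) :
    g (a * b) ≤ g y + lam * (a * b - 2 * a * y - 2 * b * y + 3 * y) := by
  by_cases hne : y = a * b
  · subst hne
    simp [penalty_self_mul_eq_zero ha hb]
  · have hlam : 0 < lam := by simpa using hg y y hy hy
    have hgain := hg (a * b) y (mul_eq_zero_or_eq_one ha hb) hy
    have hpen := one_le_penalty ha hb hy hne
    calc g (a * b) ≤ g y + lam * 1 := by linarith
      _ ≤ g y + lam * (a * b - 2 * a * y - 2 * b * y + 3 * y) := by gcongr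

end Penalty

/-- Quadratization. If `f'` is obtained from `f` by replacing every
occurrence of the product `x i * x j` by a new Boolean variable `y` (so that
`f' x (x i * x j) = f x` on Boolean inputs), and `λ` exceeds the spread of `f'`
on Boolean inputs, then the minimum of `f` over Boolean assignments equals the
minimum, over Boolean assignments including `y`, of
`f' + λ (x_i x_j - 2 x_i y - 2 x_j y + 3 y)`. -/
theorem stmt_2 {K U : ℕ} (f : (Fin (K + U) → ℝ) → ℝ)
    (f' : (Fin (K + U) → ℝ) → ℝ → ℝ) (i j : Fin (K + U)) (lam : ℝ)
    (hrepl : ∀ x : Fin (K + U) → ℝ, (∀ k, x k = 0 ∨ x k = 1) →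
      f' x (x i * x j) = f x)
    (hlam : ∀ (x x' : Fin (K + U) → ℝ) (y y' : ℝ),
      (∀ k, x k = 0 ∨ x k = 1) → (y = 0 ∨ y = 1) →
      (∀ k, x' k = 0 ∨ x' k = 1) → (y' = 0 ∨ y' = 1) →
      f' x y - f' x' y' < lam) :
    sInf {v : ℝ | ∃ x : Fin (K + U) → ℝ, (∀ k, x k = 0 ∨ x k = 1) ∧ v = f x}
      = sInf {v : ℝ | ∃ (x : Fin (K + U) → ℝ) (y : ℝ),
          (∀ k, x k = 0 ∨ x k = 1) ∧ (y = 0 ∨ y = 1) ∧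
          v = f' x y + lam * (x i * x j - 2 * x i * y - 2 * x j * y + 3 * y)} := by
  apply csInf_eq_csInf_of_forall_exists_le
  · rintro _ ⟨x, hx, rfl⟩
    refine ⟨f x, ⟨x, x i * x j, hx, mul_eq_zero_or_eq_one (hx i) (hx j), ?_⟩, le_rfl⟩
    rw [penalty_self_mul_eq_zero (hx i) (hx j), hrepl x hx, mul_zero, add_zero]
  · rintro _ ⟨x, y, hx, hy, rfl⟩
    refine ⟨f x, ⟨x, hx, rfl⟩, ?_⟩
    rw [← hrepl x hx]
    exact le_add_mul_penalty (fun z z' hz hz' => hlam x x z z' hx hz hx hz') (hx i) (hx j) hy
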